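/- Assume 0 < δ < 1 and set δ₂ := δ/6 − δ²/6 and δ₃ := min(1 − 4/(4+δ₂), δ₂) (both positive). Then for every t ≥ 0, x ∈ ℝⁿ, every scalar r ∈ ℝ and every vector V ∈ ℝⁿ: |V|² + 4 r V·∇ψ(t,x) + ( (−∂_tψ(t,x)) a(x)b(t) + 2|∇ψ(t,x)|² ) r² ≥ δ₃ ( |V|² + |∇ψ(t,x)|² r² ) + (δ/3)(−∂_tψ(t,x)) a(x)b(t) r². -/

import Mathlib

noncomputable section

open Real MeasureTheory Filter
open scoped RealInnerProductSpace ENNReal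

abbrev E (n : ℕ) : Type := EuclideanSpace ℝ (Fin n)

/-- Japanese bracket `⟨x⟩ = (1+|x|²)^{1/2}`. -/
def jap {n : ℕ} (x : E n) : ℝ := Real.sqrt (1 + ‖x‖ ^ 2)

/-- Space coefficient `a(x) = a₀ ⟨x⟩^{-α}`. -/
def aco {n : ℕ} (a₀ α : ℝ) (x : E n) : ℝ := a₀ * jap x ^ (-α)

/-- Time coefficient `b(t) = (1+t)^{-β}`. -/
def bco (β t : ℝ) : ℝ := (1 + t) ^ (-β)

/-- The constant `A = (1+β)a₀ / ((2-α)²(2+δ))`. -/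
def Aco (a₀ α β δ : ℝ) : ℝ := (1 + β) * a₀ / ((2 - α) ^ 2 * (2 + δ))

/-- The weight `ψ(t,x) = A ⟨x⟩^{2-α}/(1+t)^{1+β}`. -/
def psiW {n : ℕ} (a₀ α β δ : ℝ) (t : ℝ) (x : E n) : ℝ :=
  Aco a₀ α β δ * jap x ^ (2 - α) / (1 + t) ^ (1 + β)

/-- Laplacian of `f : ℝⁿ → ℝ` as the sum of second partial derivatives. -/
def lap {n : ℕ} (f : E n → ℝ) (x : E n) : ℝ :=
  ∑ i, fderiv ℝ (fun y => fderiv ℝ f y (EuclideanSpace.single i 1)) x (EuclideanSpace.single i 1)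

/-- Divergence of a vector field on `ℝⁿ`. -/
def divg {n : ℕ} (V : E n → E n) (x : E n) : ℝ :=
  ∑ i, fderiv ℝ (fun y => V y i) x (EuclideanSpace.single i 1)

/-!
Both derivatives of `ψ` are explicit: `∇ψ = A (2-α) ⟨x⟩^{-α} (1+t)^{-(1+β)} x` and
`∂_tψ = -(1+β) ψ / (1+t)`. With `(1+β) a₀ = (2+δ)(2-α)² A` this makes `(-∂_tψ) a b` equal to
`(2+δ)|∇ψ|²` with `|x|²` replaced by `⟨x⟩² ≥ |x|²`. Given `Q ≥ (2+δ)|∇ψ|²` for `Q = (-∂_tψ) a b`, the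
fraction `1 - δ/3` of `Q` together with `(2 - δ₃)|∇ψ|²` dominates `(4+δ₂)|∇ψ|²`, and what remains is
the quadratic form `(1-δ₃)|V|² + 4 r V·∇ψ + (4+δ₂)|∇ψ|² r²`, which is nonnegative since
`4 ≤ (1-δ₃)(4+δ₂)` by the choice of `δ₃`.
-/

section QuadraticForm

variable {F : Type*} [NormedAddCommGroup F] [InnerProductSpace ℝ F]

theorem quadratic_form_nonneg {a c : ℝ} (ha : 0 < a) (hac : 4 ≤ a * c) (V G : F) (r : ℝ) :
    0 ≤ a * ‖V‖ ^ 2 + 4 * r * ⟪V, G⟫ + c * ‖G‖ ^ 2 * r ^ 2 := by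
  have hinner : |r * ⟪V, G⟫| ≤ ‖V‖ * (|r| * ‖G‖) := by
    rw [abs_mul]
    nlinarith [abs_real_inner_le_norm V G, abs_nonneg r]
  have hsq : 0 ≤ (a * ‖V‖ - 2 * (|r| * ‖G‖)) ^ 2 + (a * c - 4) * (|r| * ‖G‖) ^ 2 :=
    add_nonneg (sq_nonneg _) (mul_nonneg (by linarith) (sq_nonneg _))
  have hr : (|r| * ‖G‖) ^ 2 = ‖G‖ ^ 2 * r ^ 2 := by rw [mul_pow, sq_abs]; ring
  refine nonneg_of_mul_nonneg_right ?_ ha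
  nlinarith [neg_abs_le (r * ⟪V, G⟫)]

theorem quadratic_form_ge_of_le {δ Q : ℝ} (hδ : 0 ≤ δ) (hδ3 : δ ≤ 3) {G : F}
    (hQ : (2 + δ) * ‖G‖ ^ 2 ≤ Q) (V : F) (r : ℝ) :
    min (1 - 4 / (4 + (δ / 6 - δ ^ 2 / 6))) (δ / 6 - δ ^ 2 / 6) * (‖V‖ ^ 2 + ‖G‖ ^ 2 * r ^ 2)
        + δ / 3 * Q * r ^ 2
      ≤ ‖V‖ ^ 2 + 4 * r * ⟪V, G⟫ + (Q + 2 * ‖G‖ ^ 2) * r ^ 2 := by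
  set ε := δ / 6 - δ ^ 2 / 6 with hε_def
  set m := min (1 - 4 / (4 + ε)) ε
  have hε : 0 < 4 + ε := by nlinarith [mul_le_mul_of_nonneg_left hδ3 hδ]
  have hm : 4 / (4 + ε) ≤ 1 - m := by linarith [min_le_left (1 - 4 / (4 + ε)) ε]
  have hm0 : 0 < 1 - m := lt_of_lt_of_le (by positivity) hm
  have hmε : 4 ≤ (1 - m) * (4 + ε) := (div_le_iff₀ hε).mp hm
  have hQ' : (4 + ε) * ‖G‖ ^ 2 ≤ (1 - δ / 3) * Q + (2 - m) * ‖G‖ ^ 2 := by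
    have hQδ : (1 - δ / 3) * ((2 + δ) * ‖G‖ ^ 2) ≤ (1 - δ / 3) * Q :=
      mul_le_mul_of_nonneg_left hQ (by linarith)
    have hmG : m * ‖G‖ ^ 2 ≤ ε * ‖G‖ ^ 2 := mul_le_mul_of_nonneg_right (min_le_right _ _) (sq_nonneg _)
    have hid : (1 - δ / 3) * ((2 + δ) * ‖G‖ ^ 2) = (2 + 2 * ε) * ‖G‖ ^ 2 := by rw [hε_def]; ring
    linarith
  have hform := quadratic_form_nonneg hm0 hmε V G r
  nlinarith [mul_le_mul_of_nonneg_right hQ' (sq_nonneg r)]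

end QuadraticForm

theorem jap_pos {n : ℕ} (x : E n) : 0 < jap x := Real.sqrt_pos.2 (by positivity)

theorem jap_rpow {n : ℕ} (x : E n) (p : ℝ) : jap x ^ p = (1 + ‖x‖ ^ 2) ^ (p / 2) := by
  rw [jap, Real.sqrt_eq_rpow, ← Real.rpow_mul (by positivity)]
  ring_nf

theorem hasFDerivAt_jap_rpow {n : ℕ} (p : ℝ) (x : E n) :
    HasFDerivAt (fun y : E n => jap y ^ p) ((p * jap x ^ (p - 2)) • innerSL ℝ x) x := by
  have hu : HasFDerivAt (fun y : E n => 1 + ‖y‖ ^ 2) (2 • innerSL ℝ x) x := by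
    simpa using ((hasFDerivAt_id x).norm_sq).const_add 1
  have hpow := (Real.hasDerivAt_rpow_const (p := p / 2)
    (Or.inl (by positivity : (1 + ‖x‖ ^ 2) ≠ 0))).comp_hasFDerivAt x hu
  have hfun : (fun y : E n => jap y ^ p) = (fun u => u ^ (p / 2)) ∘ fun y => 1 + ‖y‖ ^ 2 :=
    funext fun y => jap_rpow y p
  rw [hfun]
  refine hpow.congr_fderiv ?_
  ext y
  simp only [smul_apply, coe_innerSL_apply, nsmul_eq_mul, Nat.cast_ofNat,
    smul_eq_mul, jap_rpow]
  ring_nf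

theorem hasGradientAt_psiW {n : ℕ} (a₀ α β δ t : ℝ) (x : E n) :
    HasGradientAt (psiW a₀ α β δ t)
      ((Aco a₀ α β δ / (1 + t) ^ (1 + β) * ((2 - α) * jap x ^ (-α))) • x) x := by
  have h := (hasFDerivAt_jap_rpow (2 - α) x).const_mul (Aco a₀ α β δ / (1 + t) ^ (1 + β))
  have hfun : (fun y : E n => Aco a₀ α β δ / (1 + t) ^ (1 + β) * jap y ^ (2 - α)) = psiW a₀ α β δ t := by
    funext y; rw [psiW]; ring
  rw [hasGradientAt_iff_hasFDerivAt, ← hfun]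
  refine h.congr_fderiv ?_
  ext y
  simp only [sub_sub_cancel_left, smul_apply, coe_innerSL_apply, smul_eq_mul,
    map_smul, InnerProductSpace.toDual_apply_apply]
  ring_nf

theorem hasDerivAt_psiW_time {n : ℕ} (a₀ α β δ : ℝ) {t : ℝ} (ht : -1 < t) (x : E n) :
    HasDerivAt (fun τ => psiW a₀ α β δ τ x) (-((1 + β) * psiW a₀ α β δ t x / (1 + t))) t := by
  have hs : 0 < 1 + t := by linarith
  have hg : HasDerivAt (fun τ : ℝ => (1 + τ) ^ (1 + β)) ((1 + β) * (1 + t) ^ β) t := by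
    simpa using ((hasDerivAt_id t).const_add 1).rpow_const (p := 1 + β) (Or.inl hs.ne')
  have h := (hasDerivAt_const t (Aco a₀ α β δ * jap x ^ (2 - α))).div hg (by positivity)
  have hsplit : (1 + t) ^ (1 + β) = (1 + t) * (1 + t) ^ β := by
    rw [Real.rpow_add hs, Real.rpow_one]
  refine h.congr_deriv ?_
  rw [psiW, hsplit]
  field_simp
  ring

theorem psiW_dissipation_ge {n : ℕ} {a₀ α β δ t : ℝ} (hα : α ≠ 2) (hδ : 0 < 2 + δ) (ht : -1 < t)
    (x : E n) :
    (2 + δ) * ‖gradient (psiW a₀ α β δ t) x‖ ^ 2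
      ≤ -(deriv (fun τ => psiW a₀ α β δ τ x) t) * (aco a₀ α x * bco β t) := by
  have hs : 0 < 1 + t := by linarith
  have hj : jap x ^ (2 - α) = (1 + ‖x‖ ^ 2) * jap x ^ (-α) := by
    rw [sub_eq_add_neg, Real.rpow_add (jap_pos x), jap_rpow x 2]
    norm_num
  have hb : (1 + t) ^ (-β) = (1 + t) / (1 + t) ^ (1 + β) := by
    rw [Real.rpow_add hs, Real.rpow_one, Real.rpow_neg hs.le]
    field_simp
  have hA : (1 + β) * a₀ = (2 + δ) * (2 - α) ^ 2 * Aco a₀ α β δ := by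
    rw [Aco]
    field_simp [sub_ne_zero.2 hα.symm]
  rw [(hasGradientAt_psiW a₀ α β δ t x).gradient, (hasDerivAt_psiW_time a₀ α β δ ht x).deriv,
    psiW, aco, bco, hj, hb]
  set A := Aco a₀ α β δ
  set u := (1 + t) ^ (1 + β)
  set P := jap x ^ (-α)
  have hu : 0 < u := by positivity
  calc (2 + δ) * ‖(A / u * ((2 - α) * P)) • x‖ ^ 2
      = (2 + δ) * (2 - α) ^ 2 * A ^ 2 * P ^ 2 / u ^ 2 * ‖x‖ ^ 2 := by
        rw [norm_smul, Real.norm_eq_abs, mul_pow, sq_abs]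
        field_simp
    _ ≤ (2 + δ) * (2 - α) ^ 2 * A ^ 2 * P ^ 2 / u ^ 2 * (1 + ‖x‖ ^ 2) := by gcongr; linarith
    _ = -(-((1 + β) * (A * ((1 + ‖x‖ ^ 2) * P) / u) / (1 + t))) * (a₀ * P * ((1 + t) / u)) := by
        field_simp
        linear_combination -(A * P ^ 2) * hA

theorem quadratic_estimate_T3_general {n : ℕ} (a₀ α β δ : ℝ)
    (hβ : 0 ≤ β) (hαβ : α + β < 1) (hδ : 0 < δ) (hδ1 : δ < 1)
    (t : ℝ) (ht : 0 ≤ t) (x : E n) (r : ℝ) (V : E n) :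
    ‖V‖ ^ 2 + 4 * r * ⟪V, gradient (psiW a₀ α β δ t) x⟫
        + ((-(deriv (fun τ => psiW a₀ α β δ τ x) t)) * (aco a₀ α x * bco β t)
            + 2 * ‖gradient (psiW a₀ α β δ t) x‖ ^ 2) * r ^ 2
      ≥ min (1 - 4 / (4 + (δ / 6 - δ ^ 2 / 6))) (δ / 6 - δ ^ 2 / 6) *
            (‖V‖ ^ 2 + ‖gradient (psiW a₀ α β δ t) x‖ ^ 2 * r ^ 2)
        + (δ / 3) * (-(deriv (fun τ => psiW a₀ α β δ τ x) t)) * (aco a₀ α x * bco β t) * r ^ 2 := by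
  have hdiss := psiW_dissipation_ge (a₀ := a₀) (β := β) (by linarith : α < 2).ne
    (by linarith : 0 < 2 + δ) (by linarith : -1 < t) x
  have hest := quadratic_form_ge_of_le hδ.le (by linarith) hdiss V r
  rw [ge_iff_le, mul_assoc (δ / 3)]
  exact hest

/-- the pointwise quadratic-form estimate used to treat the term `T₃`. -/
theorem quadratic_estimate_T3 {n : ℕ} (hn : 1 ≤ n) (a₀ α β δ : ℝ) (ha₀ : 0 < a₀)
    (hα : 0 ≤ α) (hβ : 0 ≤ β) (hαβ : α + β < 1) (hδ : 0 < δ) (hδ1 : δ < 1)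
    (t : ℝ) (ht : 0 ≤ t) (x : E n) (r : ℝ) (V : E n) :
    ‖V‖ ^ 2 + 4 * r * ⟪V, gradient (psiW a₀ α β δ t) x⟫
        + ((-(deriv (fun τ => psiW a₀ α β δ τ x) t)) * (aco a₀ α x * bco β t)
            + 2 * ‖gradient (psiW a₀ α β δ t) x‖ ^ 2) * r ^ 2
      ≥ min (1 - 4 / (4 + (δ / 6 - δ ^ 2 / 6))) (δ / 6 - δ ^ 2 / 6) *
            (‖V‖ ^ 2 + ‖gradient (psiW a₀ α β δ t) x‖ ^ 2 * r ^ 2)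
        + (δ / 3) * (-(deriv (fun τ => psiW a₀ α β δ τ x) t)) * (aco a₀ α x * bco β t) * r ^ 2 :=
  quadratic_estimate_T3_general a₀ α β δ hβ hαβ hδ hδ1 t ht x r V
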